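/- arXiv:1711.07887 — 7 statements merged into one kernel-verified Lean document; each statement's English description precedes it below -/
import Mathlib

section
/- Let c, z ∈ ℂ, let S be a finite nonempty set of positive integers with a complex ratio r_j, |r_j| > 1, assigned to each j ∈ S, let k ∈ S, and let f_k(w) = exp(c·w^k). Then both geometric sampling products below converge unconditionally and P(f_k, S, z) = P(f_k, S ∖ {k}, z); that is, ∏' over tuples (n_j)_{j∈S} of positive integers of f_k((∏_{j∈S} X_{j,n_j}(r_j))·z) equals ∏' over tuples (n_j)_{j∈S∖{k}} of positive integers of f_k((∏_{j∈S∖{k}} X_{j,n_j}(r_j))·z) (with the convention that the product over the empty index set S∖{k} = ∅ is f_k(z)). In the product P(f_k, S), the factor f_k effectively removes the integer k from S. -/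
/-!
Since `exp (c w^k)` turns sums into products, everything reduces to the sum over all tuples of
`c z^k ∏_j X_{j,n_j}(r_j)^k`. Each `X_{j,n}(r)^k` is `((r^j - 1)^{1/j})^k r^{-kn}`, a geometric
sequence in `n` with absolutely convergent sum `((r^j - 1)^{1/j})^k / (r^k - 1)`, so the sum over
tuples factors as the product of these one-variable sums. For `j = k` the factor is
`(r^k - 1) / (r^k - 1) = 1`, and it drops out.
-/

/-- Geometric sampling point `X_{k,n}(r) = (r^k - 1)^{1/k} / r^n` (principal branch). -/
noncomputable def X (k n : ℕ) (r : ℂ) : ℂ := (r ^ k - 1) ^ ((k : ℂ))⁻¹ / r ^ n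

section PiProd

variable {α R : Type*} [NormedCommRing R] [CompleteSpace R]

theorem hasSum_pi_fin_prod_and_summable_norm {n : ℕ} {f : Fin n → α → R} {a : Fin n → R}
    (hf : ∀ i, HasSum (f i) (a i)) (hnf : ∀ i, Summable fun x => ‖f i x‖) :
    HasSum (fun ν : Fin n → α => ∏ i, f i (ν i)) (∏ i, a i) ∧
      Summable fun ν : Fin n → α => ‖∏ i, f i (ν i)‖ := by
  induction n with
  | zero => exact ⟨by simp [hasSum_unique], .of_finite⟩
  | succ n ih =>
    obtain ⟨hsum, hnorm⟩ := ih (fun i => hf i.succ) (fun i => hnf i.succ)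
    have hcons : ∀ p : α × (Fin n → α),
        ∏ i, f i (Fin.consEquiv (fun _ => α) p i) = f 0 p.1 * ∏ i, f i.succ (p.2 i) := by
      intro p
      rw [Fin.prod_univ_succ]
      rfl
    have hprod := summable_mul_of_summable_norm (hnf 0) hnorm
    have hmul := HasSum.mul (f := f 0) (g := fun ν : Fin n → α => ∏ i : Fin n, f i.succ (ν i))
      (hf 0) hsum hprod
    rw [← Fin.prod_univ_succ] at hmul
    rw [← (Fin.consEquiv fun _ => α).hasSum_iff, ← (Fin.consEquiv fun _ => α).summable_iff]
    exact ⟨hmul.congr_fun hcons,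
      ((hnf 0).mul_norm hnorm).congr fun p => congrArg norm (hcons p).symm⟩

theorem hasSum_pi_prod {ι : Type*} [Fintype ι] {f : ι → α → R} {a : ι → R}
    (hf : ∀ i, HasSum (f i) (a i)) (hnf : ∀ i, Summable fun x => ‖f i x‖) :
    HasSum (fun ν : ι → α => ∏ i, f i (ν i)) (∏ i, a i) := by
  let e := Fintype.equivFin ι
  have h := (hasSum_pi_fin_prod_and_summable_norm (fun j => hf (e.symm j))
    fun j => hnf (e.symm j)).1
  rw [e.symm.prod_comp a] at h
  rw [← (e.symm.arrowCongr (.refl α)).hasSum_iff]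
  convert h using 2 with μ
  exact (e.symm.prod_comp fun i => f i (μ (e i))).symm.trans (by simp)

end PiProd

section Geometric

variable {K : Type*} [NormedDivisionRing K] {ρ : K}

theorem one_lt_norm_pow (hρ : 1 < ‖ρ‖) {k : ℕ} (hk : k ≠ 0) : 1 < ‖ρ ^ k‖ := by
  rw [norm_pow]
  exact one_lt_pow₀ hρ hk

theorem hasSum_pnat_inv_pow (hρ : 1 < ‖ρ‖) :
    HasSum (fun n : ℕ+ => (ρ ^ (n : ℕ))⁻¹) (ρ - 1)⁻¹ := by
  have hρ0 : ρ ≠ 0 := norm_pos_iff.mp (one_pos.trans hρ)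
  have hq : ‖ρ⁻¹‖ < 1 := by
    rw [norm_inv]
    exact inv_lt_one_of_one_lt₀ hρ
  have hvalue : (ρ - 1)⁻¹ = (1 - ρ⁻¹)⁻¹ * ρ⁻¹ := by
    rw [← mul_inv_rev, mul_sub, mul_one, mul_inv_cancel₀ hρ0]
  rw [hasSum_pnat_iff_hasSum_succ (f := fun n : ℕ => (ρ ^ n)⁻¹), hvalue]
  exact ((hasSum_geometric_of_norm_lt_one hq).mul_right ρ⁻¹).congr_fun fun n => by
    rw [← inv_pow, pow_succ]

theorem summable_norm_pnat_inv_pow (hρ : 1 < ‖ρ‖) :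
    Summable fun n : ℕ+ => ‖(ρ ^ (n : ℕ))⁻¹‖ := by
  simpa using (hasSum_pnat_inv_pow (K := ℝ) (ρ := ‖ρ‖) (by rwa [norm_norm])).summable

end Geometric

section SamplingPoints

theorem X_pow (j n k : ℕ) (r : ℂ) :
    X j n r ^ k = ((r ^ j - 1) ^ (j : ℂ)⁻¹) ^ k * ((r ^ k) ^ n)⁻¹ := by
  rw [X, div_pow, div_eq_mul_inv, ← pow_mul, ← pow_mul, mul_comm n k]

noncomputable def sumXPow (j k : ℕ) (r : ℂ) : ℂ := ((r ^ j - 1) ^ (j : ℂ)⁻¹) ^ k / (r ^ k - 1)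

variable (j : ℕ) {k : ℕ} (hk : k ≠ 0) {r : ℂ} (hr : 1 < ‖r‖)
include hk hr

theorem hasSum_X_pow : HasSum (fun n : ℕ+ => X j n r ^ k) (sumXPow j k r) := by
  simpa only [X_pow, sumXPow, div_eq_mul_inv] using
    (hasSum_pnat_inv_pow (one_lt_norm_pow hr hk)).mul_left (((r ^ j - 1) ^ (j : ℂ)⁻¹) ^ k)

theorem summable_norm_X_pow : Summable fun n : ℕ+ => ‖X j n r ^ k‖ := by
  simpa only [X_pow, norm_mul] using
    (summable_norm_pnat_inv_pow (one_lt_norm_pow hr hk)).mul_left ‖((r ^ j - 1) ^ (j : ℂ)⁻¹) ^ k‖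

theorem sumXPow_self : sumXPow k k r = 1 := by
  have hne : r ^ k - 1 ≠ 0 := by
    rw [sub_ne_zero]
    rintro h
    simpa [h] using one_lt_norm_pow hr hk
  rw [sumXPow, Complex.cpow_nat_inv_pow _ hk, div_self hne]

end SamplingPoints

theorem hasProd_exp_sampling (c z : ℂ) (T : Finset ℕ) (r : ℕ → ℂ) (hr : ∀ j ∈ T, 1 < ‖r j‖)
    {k : ℕ} (hk : k ≠ 0) :
    HasProd (fun ν : T → ℕ+ => Complex.exp (c * ((∏ j : T, X j (ν j) (r j)) * z) ^ k))
      (Complex.exp (c * z ^ k * ∏ j ∈ T, sumXPow j k (r j))) := by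
  have h := hasSum_pi_prod (f := fun (j : T) (n : ℕ+) => X j n (r j) ^ k)
    (fun j => hasSum_X_pow j hk (hr j j.2)) (fun j => summable_norm_X_pow j hk (hr j j.2))
  rw [← Finset.prod_coe_sort]
  convert (h.mul_left (c * z ^ k)).cexp using 2 with ν
  rw [Function.comp_apply, mul_pow, ← Finset.prod_pow]
  congr 1
  ring

theorem stmt_2_general (c z : ℂ) (S : Finset ℕ) (h0 : 0 ∉ S)
    (r : ℕ → ℂ) (hr : ∀ j ∈ S, 1 < ‖r j‖)
    (k : ℕ) (hk : k ∈ S) :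
    Multipliable (fun ν : {x // x ∈ S} → ℕ+ =>
      Complex.exp (c * ((∏ j : {x // x ∈ S}, X j.1 (ν j : ℕ) (r j.1)) * z) ^ k)) ∧
    Multipliable (fun ν : {x // x ∈ S.erase k} → ℕ+ =>
      Complex.exp (c * ((∏ j : {x // x ∈ S.erase k}, X j.1 (ν j : ℕ) (r j.1)) * z) ^ k)) ∧
    (∏' ν : {x // x ∈ S} → ℕ+,
      Complex.exp (c * ((∏ j : {x // x ∈ S}, X j.1 (ν j : ℕ) (r j.1)) * z) ^ k)) =
    (∏' ν : {x // x ∈ S.erase k} → ℕ+,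
      Complex.exp (c * ((∏ j : {x // x ∈ S.erase k}, X j.1 (ν j : ℕ) (r j.1)) * z) ^ k)) := by
  have hk0 : k ≠ 0 := ne_of_mem_of_not_mem hk h0
  have hprodS := hasProd_exp_sampling c z S r hr hk0
  have hprodE := hasProd_exp_sampling c z (S.erase k) r
    (fun j hj => hr j (Finset.mem_of_mem_erase hj)) hk0
  refine ⟨hprodS.multipliable, hprodE.multipliable, ?_⟩
  rw [hprodS.tprod_eq, hprodE.tprod_eq, ← Finset.mul_prod_erase S _ hk,
    sumXPow_self hk0 (hr k hk), one_mul]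

/-- for the function factor `f_k(w) = exp (c * w^k)` and `k ∈ S`, the geometric
sampling products over `S` and over `S \ {k}` both converge unconditionally and are equal:
`P(f_k, S, z) = P(f_k, S \ {k}, z)` (with the convention `P(f_k, ∅, z) = f_k z`, which is
automatic here since the empty tuple type has exactly one element). -/
theorem stmt_2 (c z : ℂ) (S : Finset ℕ) (hS : S.Nonempty) (h0 : 0 ∉ S)
    (r : ℕ → ℂ) (hr : ∀ j ∈ S, 1 < ‖r j‖)
    (k : ℕ) (hk : k ∈ S) :
    Multipliable (fun ν : {x // x ∈ S} → ℕ+ =>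
      Complex.exp (c * ((∏ j : {x // x ∈ S}, X j.1 (ν j : ℕ) (r j.1)) * z) ^ k)) ∧
    Multipliable (fun ν : {x // x ∈ S.erase k} → ℕ+ =>
      Complex.exp (c * ((∏ j : {x // x ∈ S.erase k}, X j.1 (ν j : ℕ) (r j.1)) * z) ^ k)) ∧
    (∏' ν : {x // x ∈ S} → ℕ+,
      Complex.exp (c * ((∏ j : {x // x ∈ S}, X j.1 (ν j : ℕ) (r j.1)) * z) ^ k)) =
    (∏' ν : {x // x ∈ S.erase k} → ℕ+,
      Complex.exp (c * ((∏ j : {x // x ∈ S.erase k}, X j.1 (ν j : ℕ) (r j.1)) * z) ^ k)) :=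
  stmt_2_general c z S h0 r hr k hk
end

section
/- Let R > 0, let f : ℂ → ℂ be analytic and nonzero at every point of the open ball B(0,R) with f(0) = 1, let z ∈ B(0,R), let r be a real number with r > 1, and let S be a nonempty finite set of positive integers. Form the geometric sampling products with the common ratio r_k = r for every k ∈ S. Then both products below converge and P(f, S, z) = ∏_{n=|S|}^{∞} [ f( (∏_{k∈S} (r^k − 1)^{1/k}) · z / r^n ) ]^{C(n−1, |S|−1)}, where C(n−1, |S|−1) is the binomial coefficient, equal to the number of ways |S| positive integers can sum to n: consolidating all |S| exponents n_k into the single exponent n = Σ_{k∈S} n_k reduces the multi-index product to a product along a single geometric sequence with multiplicities. -/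
/-!
With `c = ∏ k ∈ S, (r ^ k - 1) ^ (1 / k)`, the sample point of a tuple `ν` is `c z / r ^ n` with
`n = ∑ k, ν k`, so it depends on `ν` only through `n`. Grouping the tuples by `n` gives the
compositions of `n` into `|S|` positive parts, `C(n - 1, |S| - 1)` of them by stars and bars.
Regrouping an infinite product is legitimate once it converges unconditionally, and it does:
`f w - 1 = O(w)` at `0`, while `∑ ν, r ^ (-∑ k, ν k) < ∞` because the fibre sizes grow only
polynomially in `n`.
-/

/-- Geometric sampling point with real ratio `r > 1`:
`X_{k,n}(r) = (r^k - 1)^{1/k} / r^n`, positive real `k`-th root. -/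
noncomputable def Xr (k n : ℕ) (r : ℝ) : ℂ :=
  (((r ^ k - 1) ^ ((k : ℝ))⁻¹ : ℝ) : ℂ) / (r : ℂ) ^ n

open Finset Asymptotics

section Fibers

variable {α β : Type*} {σ : α → β}

theorem HasProd.pow_natCard_fiber {M : Type*} [CommMonoid M] [TopologicalSpace M]
    [ContinuousMul M] [RegularSpace M] (hσ : ∀ b, Finite {a // σ a = b}) {g : β → M} {P : M}
    (h : HasProd (fun a => g (σ a)) P) : HasProd (fun b => g b ^ Nat.card {a // σ a = b}) P := by
  refine ((Equiv.sigmaFiberEquiv σ).hasProd_iff.mpr h).sigma fun b => ?_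
  have := Fintype.ofFinite {a // σ a = b}
  have hconst : ∀ a : {a // σ a = b}, g (σ a) = g b := fun a => congrArg g a.2
  simpa [hconst, Nat.card_eq_fintype_card] using hasProd_fintype fun _ : {a // σ a = b} => g b

theorem summable_comp_of_summable_natCard_fiber_mul (hσ : ∀ b, Finite {a // σ a = b})
    {u : β → ℝ} (hu : ∀ b, 0 ≤ u b) (h : Summable fun b => Nat.card {a // σ a = b} * u b) :
    Summable fun a => u (σ a) := by
  refine (Equiv.sigmaFiberEquiv σ).summable_iff.mp <|
    (summable_sigma_of_nonneg fun _ => hu _).mpr ⟨fun b => have := hσ b; .of_finite, ?_⟩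
  refine h.congr fun b => ?_
  have := Fintype.ofFinite {a // σ a = b}
  have hconst : ∀ a : {a // σ a = b}, u (σ a) = u b := fun a => congrArg u a.2
  simp [hconst, Nat.card_eq_fintype_card]

end Fibers

section Compositions

variable {ι : Type*} [Fintype ι]

theorem card_le_sum_pnat (ν : ι → ℕ+) : Fintype.card ι ≤ ∑ i, (ν i : ℕ) := by
  simpa using Finset.card_nsmul_le_sum univ (fun i => (ν i : ℕ)) 1 fun i _ => (ν i).pos

def sumPNatEquiv (n : ℕ) :
    {ν : ι → ℕ+ // ∑ i, (ν i : ℕ) = n + Fintype.card ι} ≃ {x : ι → ℕ // ∑ i, x i = n} :=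
  (Equiv.piCongrRight fun _ => Equiv.pnatEquivNat).subtypeEquiv fun ν => by
    have hpred : ∀ i, (ν i : ℕ) = (ν i).natPred + 1 := fun i => (PNat.natPred_add_one _).symm
    have hsum : ∑ i, (ν i : ℕ) = ∑ i, (ν i).natPred + Fintype.card ι := by
      simp only [hpred, sum_add_distrib, sum_const, card_univ, smul_eq_mul, mul_one]
    simp [hsum]

theorem isEmpty_sum_pnat_eq_of_lt {n : ℕ} (hn : n < Fintype.card ι) :
    IsEmpty {ν : ι → ℕ+ // ∑ i, (ν i : ℕ) = n} :=
  ⟨fun ν => by have := card_le_sum_pnat ν.1; omega⟩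

variable [DecidableEq ι]

theorem finite_sum_pnat_eq (n : ℕ) : Finite {ν : ι → ℕ+ // ∑ i, (ν i : ℕ) = n} := by
  rcases lt_or_ge n (Fintype.card ι) with hn | hn
  · have := isEmpty_sum_pnat_eq_of_lt hn
    infer_instance
  · obtain ⟨k, rfl⟩ := Nat.exists_eq_add_of_le' hn
    exact .of_equiv _ ((sumPNatEquiv k).trans (Sym.equivNatSumOfFintype ι k).symm).symm

theorem natCard_sum_pnat_eq [Nonempty ι] {n : ℕ} (hn : 1 ≤ n) :
    Nat.card {ν : ι → ℕ+ // ∑ i, (ν i : ℕ) = n} = (n - 1).choose (Fintype.card ι - 1) := by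
  have hι := Fintype.card_pos (α := ι)
  rcases lt_or_ge n (Fintype.card ι) with hlt | hge
  · have := isEmpty_sum_pnat_eq_of_lt hlt
    rw [Nat.card_of_isEmpty, Nat.choose_eq_zero_of_lt (by omega)]
  · obtain ⟨k, rfl⟩ := Nat.exists_eq_add_of_le' hge
    rw [Nat.card_congr ((sumPNatEquiv k).trans (Sym.equivNatSumOfFintype ι k).symm),
      Nat.card_eq_fintype_card, Sym.card_sym_eq_choose, add_comm (Fintype.card ι)]
    exact Nat.choose_symm_of_eq_add (by omega)

end Compositions

section PNatSum

variable {ι : Type*} [Fintype ι] [Nonempty ι]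

def pnatSum (ν : ι → ℕ+) : ℕ+ :=
  ⟨∑ i, (ν i : ℕ), sum_pos (fun i _ => (ν i).pos) univ_nonempty⟩

theorem coe_pnatSum (ν : ι → ℕ+) : (pnatSum ν : ℕ) = ∑ i, (ν i : ℕ) := rfl

def pnatSumFiberEquiv (n : ℕ+) :
    {ν : ι → ℕ+ // pnatSum ν = n} ≃ {ν : ι → ℕ+ // ∑ i, (ν i : ℕ) = n} :=
  Equiv.subtypeEquivRight fun _ => PNat.coe_inj.symm

variable [DecidableEq ι]

theorem finite_pnatSum_fiber (n : ℕ+) : Finite {ν : ι → ℕ+ // pnatSum ν = n} :=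
  have := finite_sum_pnat_eq (ι := ι) n
  .of_equiv _ (pnatSumFiberEquiv n).symm

theorem natCard_pnatSum_fiber (n : ℕ+) :
    Nat.card {ν : ι → ℕ+ // pnatSum ν = n} = (n - 1 : ℕ).choose (Fintype.card ι - 1) := by
  rw [Nat.card_congr (pnatSumFiberEquiv n), natCard_sum_pnat_eq n.pos]

theorem summable_pow_pnatSum {ρ : ℝ} (hρ₀ : 0 ≤ ρ) (hρ₁ : ρ < 1) :
    Summable fun ν : ι → ℕ+ => ρ ^ (pnatSum ν : ℕ) := by
  refine summable_comp_of_summable_natCard_fiber_mul (u := fun n : ℕ+ => ρ ^ (n : ℕ))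
    finite_pnatSum_fiber (fun n => pow_nonneg hρ₀ _) ?_
  have hgeom : Summable fun n : ℕ+ => ((n : ℕ) : ℝ) ^ (Fintype.card ι - 1) * ρ ^ (n : ℕ) :=
    (summable_pow_mul_geometric_of_norm_lt_one (R := ℝ) _
      (by rwa [Real.norm_of_nonneg hρ₀])).comp_injective PNat.coe_injective
  refine hgeom.of_nonneg_of_le (fun n => by positivity) fun n => ?_
  rw [natCard_pnatSum_fiber]
  gcongr
  exact_mod_cast (Nat.choose_le_pow _ _).trans (Nat.pow_le_pow_left (Nat.sub_le _ _) _)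

end PNatSum

theorem prod_Xr (S : Finset ℕ) (ν : S → ℕ) (r : ℝ) :
    ∏ k : S, Xr k (ν k) r =
      ((∏ k ∈ S, (r ^ k - 1) ^ ((k : ℝ))⁻¹ : ℝ) : ℂ) / (r : ℂ) ^ ∑ k, ν k := by
  simp only [Xr, prod_div_distrib, prod_pow_eq_pow_sum, Complex.ofReal_prod]
  rw [prod_coe_sort S fun k => ((((r ^ k - 1) ^ ((k : ℝ))⁻¹ : ℝ)) : ℂ)]

theorem stmt_5_general (R : ℝ) (hR : 0 < R) (f : ℂ → ℂ)
    (hf : ∀ w ∈ Metric.ball (0 : ℂ) R, AnalyticAt ℂ f w)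
    (hf0 : f 0 = 1)
    (z : ℂ)
    (r : ℝ) (hr : 1 < r)
    (S : Finset ℕ) (hS : S.Nonempty) :
    Multipliable (fun ν : {x // x ∈ S} → ℕ+ =>
      f ((∏ k : {x // x ∈ S}, Xr k.1 (ν k : ℕ) r) * z)) ∧
    Multipliable (fun n : ℕ+ =>
      (f ((((∏ k ∈ S, (r ^ k - 1) ^ ((k : ℝ))⁻¹ : ℝ)) : ℂ) * z / (r : ℂ) ^ (n : ℕ))) ^
        Nat.choose ((n : ℕ) - 1) (S.card - 1)) ∧
    (∏' ν : {x // x ∈ S} → ℕ+, f ((∏ k : {x // x ∈ S}, Xr k.1 (ν k : ℕ) r) * z)) =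
    (∏' n : ℕ+,
      (f ((((∏ k ∈ S, (r ^ k - 1) ^ ((k : ℝ))⁻¹ : ℝ)) : ℂ) * z / (r : ℂ) ^ (n : ℕ))) ^
        Nat.choose ((n : ℕ) - 1) (S.card - 1)) := by
  have := hS.to_subtype
  set c : ℝ := ∏ k ∈ S, (r ^ k - 1) ^ ((k : ℝ))⁻¹
  set g : ℕ+ → ℂ := fun n => f (c * z / r ^ (n : ℕ))
  have hterm : ∀ ν : S → ℕ+, f ((∏ k : S, Xr k.1 (ν k : ℕ) r) * z) = g (pnatSum ν) := by
    intro ν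
    simp only [g, prod_Xr, coe_pnatSum, div_mul_eq_mul_div, c]
  have hsmall : Summable fun ν : S → ℕ+ => ‖(c * z : ℂ) / r ^ (pnatSum ν : ℕ)‖ := by
    have hr₀ : 0 < r := zero_lt_one.trans hr
    refine ((summable_pow_pnatSum (inv_nonneg.2 hr₀.le) (inv_lt_one_of_one_lt₀ hr)).mul_left
      ‖(c * z : ℂ)‖).congr fun ν => ?_
    rw [norm_div, norm_pow, Complex.norm_real, Real.norm_of_nonneg hr₀.le, inv_pow, div_eq_mul_inv]
  have hO : (fun w => f w - 1) =O[nhds 0] id := by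
    have := (hf 0 (Metric.mem_ball_self hR)).differentiableAt.isBigO_sub
    simp only [hf0, sub_zero] at this
    exact this
  have hmult : Multipliable fun ν : S → ℕ+ => g (pnatSum ν) := by
    simpa using multipliable_one_add_of_summable (hO.comp_summable_norm hsmall)
  have hP := hmult.hasProd.pow_natCard_fiber finite_pnatSum_fiber
  simp only [natCard_pnatSum_fiber, Fintype.card_coe] at hP
  rw [show (fun ν : S → ℕ+ => f ((∏ k : S, Xr k.1 (ν k : ℕ) r) * z)) = fun ν => g (pnatSum ν) from
    funext hterm]
  exact ⟨hmult, hP.multipliable, hP.tprod_eq.symm⟩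

/-- for `f` analytic and nonzero on `B(0,R)` with `f 0 = 1`, `z ∈ B(0,R)`,
a common real ratio `r > 1`, and a nonempty finite set `S` of positive integers, the
multi-index geometric sampling product `P(f, S, z)` and the consolidated single-sequence
product `∏_{n ≥ |S|} f((∏_{k∈S}(r^k-1)^{1/k}) z / r^n)^{C(n-1,|S|-1)}` both converge and
are equal.  (Indexing the latter by `n : ℕ+` is harmless: the binomial coefficient
`C(n-1, |S|-1)` vanishes for `1 ≤ n < |S|`.) -/
theorem stmt_5 (R : ℝ) (hR : 0 < R) (f : ℂ → ℂ)
    (hf : ∀ w ∈ Metric.ball (0 : ℂ) R, AnalyticAt ℂ f w)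
    (hfne : ∀ w ∈ Metric.ball (0 : ℂ) R, f w ≠ 0)
    (hf0 : f 0 = 1)
    (z : ℂ) (hz : z ∈ Metric.ball (0 : ℂ) R)
    (r : ℝ) (hr : 1 < r)
    (S : Finset ℕ) (hS : S.Nonempty) (h0 : 0 ∉ S) :
    Multipliable (fun ν : {x // x ∈ S} → ℕ+ =>
      f ((∏ k : {x // x ∈ S}, Xr k.1 (ν k : ℕ) r) * z)) ∧
    Multipliable (fun n : ℕ+ =>
      (f ((((∏ k ∈ S, (r ^ k - 1) ^ ((k : ℝ))⁻¹ : ℝ)) : ℂ) * z / (r : ℂ) ^ (n : ℕ))) ^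
        Nat.choose ((n : ℕ) - 1) (S.card - 1)) ∧
    (∏' ν : {x // x ∈ S} → ℕ+, f ((∏ k : {x // x ∈ S}, Xr k.1 (ν k : ℕ) r) * z)) =
    (∏' n : ℕ+,
      (f ((((∏ k ∈ S, (r ^ k - 1) ^ ((k : ℝ))⁻¹ : ℝ)) : ℂ) * z / (r : ℂ) ^ (n : ℕ))) ^
        Nat.choose ((n : ℕ) - 1) (S.card - 1)) :=
  stmt_5_general R hR f hf hf0 z r hr S hS
end

section
/- Let j, k ≥ 1 be integers, let c, z ∈ ℂ, and for real r > 1 set P_r = ∏_{n=1}^{∞} exp( c · ((r^k − 1)^{1/k} · z / r^n)^j ), where (r^k − 1)^{1/k} is the positive real k-th root (this product converges for every r > 1). Then as r → 1 from above: (i) if j = k, then P_r → exp(c·z^k); (ii) if j > k or c = 0, then P_r → 1; (iii) if j < k and Re(c·z^j) < 0, then P_r → 0; (iv) if j < k and Re(c·z^j) > 0, then |P_r| → ∞. (Function Factor Cutoff Tool: letting r ↓ 1 nullifies function factors of order higher than k and isolates the order-k factor.) -/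
open Topology

/-- `P_r = ∏_{n=1}^∞ exp (c * ((r^k - 1)^{1/k} * z / r^n)^j)` with the positive real
`k`-th root: the geometric sampling product `P(f_j, {k}, z)` of the function factor
`f_j(w) = exp (c w^j)` over the sequence generated by `k` with real ratio `r`. -/
noncomputable def Pr (j k : ℕ) (c z : ℂ) (r : ℝ) : ℂ :=
  ∏' n : ℕ+,
    Complex.exp (c * ((((r ^ k - 1) ^ ((k : ℝ))⁻¹ : ℝ) : ℂ) * z / (r : ℂ) ^ (n : ℕ)) ^ j)

/-!
The exponents `c (x / r^n)^j = c x^j (r^{-j})^n` form a geometric series, so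
`P_r = exp (c z^j S(r))` with `S(r) = (r^k - 1)^{j/k} / (r^j - 1)`. As `r → 1⁺` we have
`r^k - 1 → 0⁺`, and comparing `r^j - 1` with `r^k - 1` sandwiches `S(r)` against
`(r^k - 1)^{j/k - 1}`: `S ≡ 1` if `j = k`, `S → 0` if `j > k` and `S → ∞` if `j < k`.
Finally `|P_r| = exp (Re (c z^j) S(r))`.
-/

open Filter

theorem hasSum_pnat_geometric_of_norm_lt_one {K : Type*} [NormedField K] {q : K} (hq : ‖q‖ < 1) :
    HasSum (fun n : ℕ+ => q ^ (n : ℕ)) (q / (1 - q)) := by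
  have hq1 : 1 - q ≠ 0 := sub_ne_zero.2 fun h => by simp [← h] at hq
  rw [hasSum_pnat_iff (f := fun n => q ^ n), pow_zero, div_add_one hq1, add_sub_cancel,
    one_div]
  exact hasSum_geometric_of_norm_lt_one hq

theorem hasSum_pnat_mul_div_pow_pow {K : Type*} [NormedField K] {a : K} (ha : 1 < ‖a‖)
    {j : ℕ} (hj : j ≠ 0) (c x : K) :
    HasSum (fun n : ℕ+ => c * (x / a ^ (n : ℕ)) ^ j) (c * x ^ j / (a ^ j - 1)) := by
  have ha0 : a ≠ 0 := norm_pos_iff.1 (one_pos.trans ha)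
  have hq : ‖(a ^ j)⁻¹‖ < 1 := by
    rw [norm_inv, norm_pow]
    exact inv_lt_one_of_one_lt₀ (one_lt_pow₀ ha hj)
  have haj : a ^ j - 1 ≠ 0 := sub_ne_zero.2 fun h => by simp [h] at hq
  have hsum := (hasSum_pnat_geometric_of_norm_lt_one hq).mul_left (c * x ^ j)
  rw [show c * x ^ j * ((a ^ j)⁻¹ / (1 - (a ^ j)⁻¹)) = c * x ^ j / (a ^ j - 1) by
    field_simp] at hsum
  refine hsum.congr_fun fun n => ?_
  rw [div_pow, ← pow_mul, mul_comm _ j, pow_mul, inv_pow, div_eq_mul_inv, mul_assoc]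

noncomputable def cutoffScale (j k : ℕ) (r : ℝ) : ℝ :=
  (r ^ k - 1) ^ ((j : ℝ) / k) / (r ^ j - 1)

theorem hasSum_Pr_exponents {j k : ℕ} (hj : j ≠ 0) (c z : ℂ) {r : ℝ} (hr : 1 < r) :
    HasSum (fun n : ℕ+ => c * ((((r ^ k - 1) ^ ((k : ℝ))⁻¹ : ℝ) : ℂ) * z / (r : ℂ) ^ (n : ℕ)) ^ j)
      (c * z ^ j * cutoffScale j k r) := by
  have hrk : 0 ≤ r ^ k - 1 := sub_nonneg.2 (one_le_pow₀ hr.le)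
  have hroot : ((r ^ k - 1) ^ ((k : ℝ))⁻¹) ^ j = (r ^ k - 1) ^ ((j : ℝ) / k) := by
    rw [← Real.rpow_natCast, ← Real.rpow_mul hrk, inv_mul_eq_div]
  have hsum := hasSum_pnat_mul_div_pow_pow (a := (r : ℂ))
    (by simpa [abs_of_pos (one_pos.trans hr)]) hj c ((((r ^ k - 1) ^ ((k : ℝ))⁻¹ : ℝ) : ℂ) * z)
  have hval : c * ((((r ^ k - 1) ^ ((k : ℝ))⁻¹ : ℝ) : ℂ) * z) ^ j / ((r : ℂ) ^ j - 1)
      = c * z ^ j * cutoffScale j k r := by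
    rw [mul_pow, ← Complex.ofReal_pow, hroot, cutoffScale]
    push_cast
    ring
  rwa [hval] at hsum

theorem Pr_eq_exp_cutoffScale {j k : ℕ} (hj : j ≠ 0) (c z : ℂ) {r : ℝ} (hr : 1 < r) :
    Pr j k c z r = Complex.exp (c * z ^ j * cutoffScale j k r) :=
  (hasSum_Pr_exponents hj c z hr).cexp.tprod_eq

theorem eventuallyEq_Pr {j k : ℕ} (hj : j ≠ 0) (c z : ℂ) :
    Pr j k c z =ᶠ[𝓝[>] 1] fun r => Complex.exp (c * z ^ j * cutoffScale j k r) := by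
  filter_upwards [self_mem_nhdsWithin] with r (hr : 1 < r)
  exact Pr_eq_exp_cutoffScale hj c z hr

theorem norm_Pr {j k : ℕ} (hj : j ≠ 0) (c z : ℂ) {r : ℝ} (hr : 1 < r) :
    ‖Pr j k c z r‖ = Real.exp ((c * z ^ j).re * cutoffScale j k r) := by
  rw [Pr_eq_exp_cutoffScale hj c z hr, Complex.norm_exp, Complex.re_mul_ofReal]

theorem tendsto_pow_sub_one_nhdsGT_one {k : ℕ} (hk : k ≠ 0) :
    Tendsto (fun r : ℝ => r ^ k - 1) (𝓝[>] 1) (𝓝[>] 0) := by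
  refine tendsto_nhdsWithin_of_tendsto_nhds_of_eventually_within _ ?_ ?_
  · exact ((by fun_prop : Continuous fun r : ℝ => r ^ k - 1).tendsto' 1 0 (by simp)).mono_left
      nhdsWithin_le_nhds
  · filter_upwards [self_mem_nhdsWithin] with r (hr : 1 < r)
    exact sub_pos.2 (one_lt_pow₀ hr hk)

theorem cutoffScale_self {j : ℕ} (hj : j ≠ 0) {r : ℝ} (hr : 1 < r) : cutoffScale j j r = 1 := by
  rw [cutoffScale, div_self (Nat.cast_ne_zero.2 hj), Real.rpow_one,
    div_self (sub_pos.2 (one_lt_pow₀ hr hj)).ne']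

theorem cutoffScale_nonneg (j k : ℕ) {r : ℝ} (hr : 1 ≤ r) : 0 ≤ cutoffScale j k r :=
  div_nonneg (Real.rpow_nonneg (sub_nonneg.2 (one_le_pow₀ hr)) _) (sub_nonneg.2 (one_le_pow₀ hr))

theorem cutoffScale_le_of_le {j k : ℕ} (hk : k ≠ 0) (hkj : k ≤ j) {r : ℝ} (hr : 1 < r) :
    cutoffScale j k r ≤ (r ^ k - 1) ^ ((j : ℝ) / k - 1) := by
  have hrk : 0 < r ^ k - 1 := sub_pos.2 (one_lt_pow₀ hr hk)
  rw [Real.rpow_sub_one hrk.ne', cutoffScale]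
  gcongr
  exact hr.le

theorem le_cutoffScale_of_le {j k : ℕ} (hj : j ≠ 0) (hjk : j ≤ k) {r : ℝ} (hr : 1 < r) :
    (r ^ k - 1) ^ ((j : ℝ) / k - 1) ≤ cutoffScale j k r := by
  have hrk : 0 < r ^ k - 1 := sub_pos.2 (one_lt_pow₀ hr (by omega))
  have hrj : 0 < r ^ j - 1 := sub_pos.2 (one_lt_pow₀ hr hj)
  rw [Real.rpow_sub_one hrk.ne', cutoffScale]
  gcongr
  exact hr.le

theorem tendsto_cutoffScale_zero {j k : ℕ} (hk : k ≠ 0) (hkj : k < j) :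
    Tendsto (cutoffScale j k) (𝓝[>] 1) (𝓝 0) := by
  have hexp : 0 < (j : ℝ) / k - 1 :=
    sub_pos.2 ((one_lt_div (by positivity)).2 (by exact_mod_cast hkj))
  have hbound : Tendsto (fun r : ℝ => (r ^ k - 1) ^ ((j : ℝ) / k - 1)) (𝓝[>] 1) (𝓝 0) := by
    simpa [Function.comp_def, Real.zero_rpow hexp.ne'] using
      ((Real.continuousAt_rpow_const 0 _ (Or.inr hexp.le)).tendsto.mono_left
        nhdsWithin_le_nhds).comp (tendsto_pow_sub_one_nhdsGT_one hk)
  refine tendsto_of_tendsto_of_tendsto_of_le_of_le' tendsto_const_nhds hbound ?_ ?_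
  · filter_upwards [self_mem_nhdsWithin] with r (hr : 1 < r)
    exact cutoffScale_nonneg j k hr.le
  · filter_upwards [self_mem_nhdsWithin] with r (hr : 1 < r)
    exact cutoffScale_le_of_le hk hkj.le hr

theorem tendsto_cutoffScale_atTop {j k : ℕ} (hj : j ≠ 0) (hjk : j < k) :
    Tendsto (cutoffScale j k) (𝓝[>] 1) atTop := by
  have hk : k ≠ 0 := by omega
  have hexp : (j : ℝ) / k - 1 < 0 :=
    sub_neg.2 ((div_lt_one (by positivity)).2 (by exact_mod_cast hjk))
  refine tendsto_atTop_mono' _ ?_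
    ((tendsto_rpow_neg_nhdsGT_zero hexp).comp (tendsto_pow_sub_one_nhdsGT_one hk))
  filter_upwards [self_mem_nhdsWithin] with r (hr : 1 < r)
  exact le_cutoffScale_of_le hj hjk.le hr

/-- Function Factor Cutoff Tool: the product `P_r` converges for every
`r > 1`, and as `r → 1⁺`: (i) if `j = k` then `P_r → exp (c z^k)`; (ii) if `j > k` or
`c = 0` then `P_r → 1`; (iii) if `j < k` and `Re (c z^j) < 0` then `P_r → 0`;
(iv) if `j < k` and `Re (c z^j) > 0` then `|P_r| → ∞`. -/
theorem stmt_6 (j k : ℕ) (hj : 1 ≤ j) (hk : 1 ≤ k) (c z : ℂ) :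
    (∀ r : ℝ, 1 < r →
      Multipliable (fun n : ℕ+ =>
        Complex.exp
          (c * ((((r ^ k - 1) ^ ((k : ℝ))⁻¹ : ℝ) : ℂ) * z / (r : ℂ) ^ (n : ℕ)) ^ j))) ∧
    (j = k →
      Filter.Tendsto (fun r : ℝ => Pr j k c z r) (𝓝[>] (1 : ℝ))
        (𝓝 (Complex.exp (c * z ^ k)))) ∧
    (k < j ∨ c = 0 →
      Filter.Tendsto (fun r : ℝ => Pr j k c z r) (𝓝[>] (1 : ℝ)) (𝓝 1)) ∧
    (j < k → (c * z ^ j).re < 0 →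
      Filter.Tendsto (fun r : ℝ => Pr j k c z r) (𝓝[>] (1 : ℝ)) (𝓝 0)) ∧
    (j < k → 0 < (c * z ^ j).re →
      Filter.Tendsto (fun r : ℝ => ‖Pr j k c z r‖) (𝓝[>] (1 : ℝ))
        Filter.atTop) := by
  have hj0 : j ≠ 0 := by omega
  have hPr := eventuallyEq_Pr (k := k) hj0 c z
  have hnorm : (fun r => ‖Pr j k c z r‖) =ᶠ[𝓝[>] 1]
      fun r => Real.exp ((c * z ^ j).re * cutoffScale j k r) := by
    filter_upwards [self_mem_nhdsWithin] with r (hr : 1 < r)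
    exact norm_Pr hj0 c z hr
  refine ⟨fun r hr => (hasSum_Pr_exponents hj0 c z hr).cexp.multipliable, ?_, ?_, ?_, ?_⟩
  · rintro rfl
    refine tendsto_const_nhds.congr' (hPr.trans ?_).symm
    filter_upwards [self_mem_nhdsWithin] with r (hr : 1 < r)
    rw [cutoffScale_self hj0 hr, Complex.ofReal_one, mul_one]
  · rintro (hkj | rfl)
    · simpa using ((tendsto_cutoffScale_zero (by omega) hkj).ofReal.const_mul (c * z ^ j)).cexp
        |>.congr' hPr.symm
    · simp only [zero_mul, Complex.exp_zero] at hPr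
      exact tendsto_const_nhds.congr' hPr.symm
  · intro hjk hneg
    rw [tendsto_zero_iff_norm_tendsto_zero]
    exact (Real.tendsto_exp_atBot.comp
      ((tendsto_cutoffScale_atTop hj0 hjk).const_mul_atTop_of_neg hneg)).congr' hnorm.symm
  · intro hjk hpos
    exact (Real.tendsto_exp_atTop.comp
      ((tendsto_cutoffScale_atTop hj0 hjk).const_mul_atTop hpos)).congr' hnorm.symm
end

section
/- Let U ⊆ ℂ be open and star-shaped with respect to the point z (for every w ∈ U the segment from z to w lies in U), let f : ℂ → ℂ be analytic and nonzero at every point of U, and let Δz ∈ ℂ be nonzero with z + Δz ∈ U. Then for every real r > 1 the series ∑_{n=1}^{∞} Log( f(z + ((r−1)/r^n)·Δz) / f(z) ) converges absolutely, where Log is the principal branch of the complex logarithm, and f′(z) = (f(z)/Δz) · lim_{r→1⁺} ∑_{n=1}^{∞} Log( f(z + ((r−1)/r^n)·Δz) / f(z) ). In particular, the derivative is obtained without letting Δz → 0: taking the limit r ↓ 1 suffices. (Product Derivative.) -/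
/-!
Put `g t = Log (f (z + t Δz) / f z)`, so that `g 0 = 0` and `g'(0) = f'(z) Δz / f z`. The weights
`(r - 1) / r ^ n`, `n ≥ 1`, are positive, sum to `1`, and are all at most `r - 1`. Since
`g t = t g'(0) + o(t)`, the series `∑ g ((r - 1) / r ^ n)` is a weighted average of `g'(0)` up to
an error `o(1)` as `r → 1⁺`, hence tends to `g'(0)`.
-/

open Topology Filter Asymptotics

section WeightedSums

variable {ι E : Type*} [NormedAddCommGroup E] [NormedSpace ℝ E]

lemma norm_tsum_sub_le_of_norm_sub_smul_le [CompleteSpace E] {x : ι → E} {w : ι → ℝ} {a : E}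
    {ε : ℝ} (hw : HasSum w 1) (hx : ∀ i, ‖x i - w i • a‖ ≤ ε * w i) :
    ‖∑' i, x i - a‖ ≤ ε := by
  have hwa : HasSum (fun i => w i • a) a := by simpa using hw.smul_const a
  have herr : Summable (fun i => x i - w i • a) :=
    .of_norm_bounded (hw.summable.mul_left ε) hx
  have hxs : Summable x := by simpa using herr.add hwa.summable
  have hsum : ∑' i, x i - a = ∑' i, (x i - w i • a) := by
    rw [hxs.tsum_sub hwa.summable, hwa.tsum_eq]
  rw [hsum]
  simpa using tsum_of_norm_bounded (hw.mul_left ε) hx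

variable {g : ℝ → E} {a : E}

lemma summable_norm_comp_of_hasDerivAt (hg : HasDerivAt g a 0) (hg0 : g 0 = 0) {w : ι → ℝ}
    (hw : Summable fun i => ‖w i‖) : Summable fun i => ‖g (w i)‖ := by
  have hO := hg.isBigO_sub
  simp only [hg0, sub_zero] at hO
  exact hO.comp_summable_norm hw

lemma tendsto_tsum_comp_of_hasDerivAt [CompleteSpace E] {α : Type*} {l : Filter α}
    (hg : HasDerivAt g a 0) (hg0 : g 0 = 0) {w : α → ι → ℝ}
    (hw0 : ∀ᶠ r in l, 0 ≤ w r) (hw1 : ∀ᶠ r in l, HasSum (w r) 1)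
    (hwu : TendstoUniformly w 0 l) :
    Tendsto (fun r => ∑' i, g (w r i)) l (𝓝 a) := by
  rw [Metric.tendsto_nhds]
  intro ε hε
  have hlin : ∀ᶠ t in 𝓝 0, ‖g t - t • a‖ ≤ ε / 2 * ‖t‖ := by
    simpa [hg0] using (hasDerivAt_iff_isLittleO_nhds_zero.mp hg).def (half_pos hε)
  obtain ⟨δ, hδ, hδlin⟩ := Metric.eventually_nhds_iff.mp hlin
  filter_upwards [hw0, hw1, Metric.tendstoUniformly_iff.mp hwu δ hδ] with r hr0 hr1 hrδ
  have hbound : ∀ i, ‖g (w r i) - w r i • a‖ ≤ ε / 2 * w r i := fun i => by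
    have hi := hδlin (by simpa [dist_comm] using hrδ i)
    rwa [Real.norm_of_nonneg (hr0 i)] at hi
  rw [dist_eq_norm]
  exact (norm_tsum_sub_le_of_norm_sub_smul_le hr1 hbound).trans_lt (half_lt_self hε)

end WeightedSums

section GeometricWeights

lemma hasSum_sub_one_div_pow {r : ℝ} (hr : 1 < r) :
    HasSum (fun n : ℕ+ => (r - 1) / r ^ (n : ℕ)) 1 := by
  have hgeom : HasSum (fun n : ℕ => (r - 1) / r * (1 / r) ^ n) ((r - 1) / r * (1 - 1 / r)⁻¹) :=
    (hasSum_geometric_of_lt_one (by positivity) ((div_lt_one (by positivity)).mpr hr)).mul_left _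
  have hone : (r - 1) / r * (1 - 1 / r)⁻¹ = 1 := by
    have : r - 1 ≠ 0 := by linarith
    field_simp
  rw [← Equiv.pnatEquivNat.symm.hasSum_iff]
  convert hgeom using 1
  · ext n
    simp only [Function.comp_apply, Equiv.pnatEquivNat_symm_apply, Nat.succPNat_coe, pow_succ]
    field_simp
    rw [one_div, inv_pow, mul_assoc, mul_inv_cancel₀ (by positivity), mul_one]
  · exact hone.symm

lemma sub_one_div_pow_nonneg {r : ℝ} (hr : 1 < r) (n : ℕ+) : 0 ≤ (r - 1) / r ^ (n : ℕ) :=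
  div_nonneg (by linarith) (by positivity)

lemma sub_one_div_pow_le {r : ℝ} (hr : 1 < r) (n : ℕ+) : (r - 1) / r ^ (n : ℕ) ≤ r - 1 :=
  div_le_self (by linarith) (one_le_pow₀ hr.le)

lemma tendstoUniformly_sub_one_div_pow :
    TendstoUniformly (fun (r : ℝ) (n : ℕ+) => (r - 1) / r ^ (n : ℕ)) 0 (𝓝[>] 1) := by
  rw [Metric.tendstoUniformly_iff]
  intro δ hδ
  have hnear : ∀ᶠ r in 𝓝[>] (1 : ℝ), r < 1 + δ :=
    nhdsWithin_le_nhds (eventually_lt_nhds (by linarith))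
  filter_upwards [self_mem_nhdsWithin, hnear] with r (hr : 1 < r) hrδ n
  rw [Pi.zero_apply, dist_zero_left, Real.norm_of_nonneg (sub_one_div_pow_nonneg hr n)]
  linarith [sub_one_div_pow_le hr n]

end GeometricWeights

lemma hasDerivAt_clog_div_along_line {f : ℂ → ℂ} {f' z : ℂ} (hf : HasDerivAt f f' z)
    (hfz : f z ≠ 0) (Δz : ℂ) :
    HasDerivAt (fun t : ℝ => Complex.log (f (z + t * Δz) / f z)) (f' * Δz / f z) 0 := by
  have hline : HasDerivAt (fun t : ℂ => z + t * Δz) Δz 0 := by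
    simpa using ((hasDerivAt_id (0 : ℂ)).mul_const Δz).const_add z
  have hquot : HasDerivAt (fun t : ℂ => f (z + t * Δz) / f z) (f' * Δz / f z) 0 :=
    ((by simpa using hf : HasDerivAt f f' (z + 0 * Δz)).comp 0 hline).div_const (f z)
  have hlog := (hquot.clog (by simp [hfz, Complex.one_mem_slitPlane])).comp_ofReal
  simpa [hfz] using hlog

theorem stmt_8_general (U : Set ℂ) (z : ℂ) (hz : z ∈ U)
    (f : ℂ → ℂ)
    (hf : ∀ w ∈ U, AnalyticAt ℂ f w)
    (hfne : ∀ w ∈ U, f w ≠ 0)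
    (Δz : ℂ) (hΔ : Δz ≠ 0) :
    (∀ r : ℝ, 1 < r →
      Summable (fun n : ℕ+ =>
        ‖Complex.log (f (z + (((r - 1) / r ^ (n : ℕ) : ℝ) : ℂ) * Δz) / f z)‖)) ∧
    Filter.Tendsto
      (fun r : ℝ =>
        f z / Δz *
          ∑' n : ℕ+, Complex.log (f (z + (((r - 1) / r ^ (n : ℕ) : ℝ) : ℂ) * Δz) / f z))
      (𝓝[>] (1 : ℝ)) (𝓝 (deriv f z)) := by
  have hfz := hfne z hz
  have hg := hasDerivAt_clog_div_along_line (hf z hz).differentiableAt.hasDerivAt hfz Δz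
  have hg0 : Complex.log (f (z + ((0 : ℝ) : ℂ) * Δz) / f z) = 0 := by simp [hfz]
  refine ⟨fun r hr => summable_norm_comp_of_hasDerivAt hg hg0 ?_, ?_⟩
  · simpa [Real.norm_of_nonneg (sub_one_div_pow_nonneg hr _)] using
      (hasSum_sub_one_div_pow hr).summable
  · have hlim := tendsto_tsum_comp_of_hasDerivAt (l := 𝓝[>] (1 : ℝ)) hg hg0
      (eventually_nhdsWithin_of_forall fun r hr n => sub_one_div_pow_nonneg hr n)
      (eventually_nhdsWithin_of_forall fun r hr => hasSum_sub_one_div_pow hr)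
      tendstoUniformly_sub_one_div_pow
    convert hlim.const_mul (f z / Δz) using 2
    field_simp

/-- Product Derivative: if `U` is open and star-shaped with respect to `z`,
`f` is analytic and nonzero on `U`, `Δz ≠ 0` and `z + Δz ∈ U`, then for every real `r > 1`
the series `∑_{n≥1} Log (f (z + ((r-1)/r^n) Δz) / f z)` converges absolutely, and
`f'(z) = (f z / Δz) · lim_{r→1⁺} ∑_{n≥1} Log (f (z + ((r-1)/r^n) Δz) / f z)`. -/
theorem stmt_8 (U : Set ℂ) (hU : IsOpen U) (z : ℂ) (hz : z ∈ U)
    (hstar : ∀ w ∈ U, segment ℝ z w ⊆ U)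
    (f : ℂ → ℂ)
    (hf : ∀ w ∈ U, AnalyticAt ℂ f w)
    (hfne : ∀ w ∈ U, f w ≠ 0)
    (Δz : ℂ) (hΔ : Δz ≠ 0) (hzΔ : z + Δz ∈ U) :
    (∀ r : ℝ, 1 < r →
      Summable (fun n : ℕ+ =>
        ‖Complex.log (f (z + (((r - 1) / r ^ (n : ℕ) : ℝ) : ℂ) * Δz) / f z)‖)) ∧
    Filter.Tendsto
      (fun r : ℝ =>
        f z / Δz *
          ∑' n : ℕ+, Complex.log (f (z + (((r - 1) / r ^ (n : ℕ) : ℝ) : ℂ) * Δz) / f z))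
      (𝓝[>] (1 : ℝ)) (𝓝 (deriv f z)) :=
  stmt_8_general U z hz f hf hfne Δz hΔ
end

section
/- Let n be a positive integer and let s ∈ ℂ satisfy Re(s) ≥ 0 and Re(p^{s·π(p)}) ≥ 1/2 for every prime p dividing n. Then |μ⋆(n, s)| ≤ 1. -/
/-!
Taking norms, `‖μ⋆(n, s)‖ = ∏_{p ∣ n} ‖p^{s π(p)} - 1‖^{1/π(p)} / n^{Re s}`. The hypothesis
`Re z ≥ 1/2` says exactly that `z` is at least as close to `1` as to `0`, so each factor is at most
`‖p^{s π(p)}‖^{1/π(p)} = p^{Re s}`. Hence the numerator is at most `(∏_{p ∣ n} p)^{Re s}`, and the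
radical of `n` divides `n`.
-/

/-- The generalized Möbius function
`μ⋆(n, s) = (−1)^{ω(n)} · (∏_{p ∈ P(n)} (p^{s·π(p)} − 1)^{1/π(p)}) / n^s`
(all complex powers principal); for `n = 1` the empty product gives `μ⋆(1, s) = 1`. -/
noncomputable def muStar (n : ℕ) (s : ℂ) : ℂ :=
  (-1 : ℂ) ^ n.primeFactors.card *
    (∏ p ∈ n.primeFactors,
      ((p : ℂ) ^ (s * (Nat.primeCounting p : ℂ)) - 1) ^ ((Nat.primeCounting p : ℂ))⁻¹) /
    (n : ℂ) ^ s

theorem Complex.norm_sub_one_le_norm_of_half_le_re {z : ℂ} (hz : 1 / 2 ≤ z.re) :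
    ‖z - 1‖ ≤ ‖z‖ := by
  have hsq : ‖z - 1‖ ^ 2 ≤ ‖z‖ ^ 2 := by
    rw [Complex.sq_norm, Complex.sq_norm, Complex.normSq_sub]
    simp only [map_one, mul_one]
    linarith
  exact (sq_le_sq₀ (norm_nonneg _) (norm_nonneg _)).mp hsq

theorem Complex.norm_cpow_mul_sub_one_cpow_inv_le {x : ℝ} (hx : 0 < x) (s : ℂ) {k : ℝ}
    (hk : 0 < k) (hre : 1 / 2 ≤ ((x : ℂ) ^ (s * k)).re) :
    ‖((x : ℂ) ^ (s * k) - 1) ^ (k : ℂ)⁻¹‖ ≤ x ^ s.re := by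
  have hnorm : ‖(x : ℂ) ^ (s * k)‖ = x ^ (s.re * k) := by
    rw [Complex.norm_cpow_eq_rpow_re_of_pos hx, Complex.re_mul_ofReal]
  calc ‖((x : ℂ) ^ (s * k) - 1) ^ (k : ℂ)⁻¹‖
      = ‖(x : ℂ) ^ (s * k) - 1‖ ^ k⁻¹ := by
        rw [← Complex.ofReal_inv, Complex.norm_cpow_real]
    _ ≤ ‖(x : ℂ) ^ (s * k)‖ ^ k⁻¹ :=
        Real.rpow_le_rpow (norm_nonneg _) (Complex.norm_sub_one_le_norm_of_half_le_re hre)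
          (inv_nonneg.mpr hk.le)
    _ = x ^ s.re := by
        rw [hnorm, ← Real.rpow_mul hx.le, mul_inv_cancel_right₀ hk.ne']

theorem Nat.Prime.primeCounting_pos {p : ℕ} (hp : p.Prime) : 0 < p.primeCounting :=
  Nat.pos_of_ne_zero <| Nat.primeCounting_eq_zero_iff.not.mpr hp.one_lt.not_ge

theorem Nat.prod_primeFactors_rpow_le {n : ℕ} (hn : n ≠ 0) {r : ℝ} (hr : 0 ≤ r) :
    ∏ p ∈ n.primeFactors, (p : ℝ) ^ r ≤ (n : ℝ) ^ r := by
  rw [Real.finsetProd_rpow _ _ fun p _ ↦ Nat.cast_nonneg p, ← Nat.cast_prod]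
  gcongr
  exact Nat.le_of_dvd (Nat.pos_of_ne_zero hn) (Nat.prod_primeFactors_dvd n)

theorem norm_muStar {n : ℕ} (hn : n ≠ 0) (s : ℂ) :
    ‖muStar n s‖ = (∏ p ∈ n.primeFactors,
      ‖((p : ℂ) ^ (s * (Nat.primeCounting p : ℂ)) - 1) ^ ((Nat.primeCounting p : ℂ))⁻¹‖) /
        (n : ℝ) ^ s.re := by
  have hn' : (0 : ℝ) < n := by positivity
  rw [muStar, norm_div, norm_mul, norm_pow, norm_neg, norm_one, one_pow, one_mul, norm_prod,
    ← Complex.ofReal_natCast n, Complex.norm_cpow_eq_rpow_re_of_pos hn']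

/-- if `n ≥ 1`, `Re s ≥ 0`, and `Re (p^{s·π(p)}) ≥ 1/2` for every prime `p`
dividing `n`, then `|μ⋆(n, s)| ≤ 1`. -/
theorem stmt_11 (n : ℕ) (hn : 0 < n) (s : ℂ) (hs : 0 ≤ s.re)
    (hp : ∀ p ∈ n.primeFactors,
      (1 : ℝ) / 2 ≤ ((p : ℂ) ^ (s * (Nat.primeCounting p : ℂ))).re) :
    ‖muStar n s‖ ≤ 1 := by
  rw [norm_muStar hn.ne', div_le_one (by positivity)]
  refine le_trans (Finset.prod_le_prod (fun _ _ ↦ norm_nonneg _) fun p hpn ↦ ?_)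
    (Nat.prod_primeFactors_rpow_le hn.ne' hs)
  have hprime := Nat.prime_of_mem_primeFactors hpn
  have hre := hp p hpn
  rw [← Complex.ofReal_natCast p, ← Complex.ofReal_natCast (Nat.primeCounting p)] at hre ⊢
  exact Complex.norm_cpow_mul_sub_one_cpow_inv_le (by exact_mod_cast hprime.pos) s
    (by exact_mod_cast hprime.primeCounting_pos) hre
end

section
/- Let s ∈ ℂ with Re(s) > 0. Then: (i) for every m ≥ 1 the series T_m(s) = ∑ μ⋆(n, s), summed over all integers n ≥ 2 whose greatest prime factor equals the m-th prime p_m, converges absolutely; and (ii) 1 + ∑_{m=1}^{∞} T_m(s) = 0, where the outer sum is the limit of the partial sums ∑_{m=1}^{M} T_m(s) as M → ∞. Equivalently, the sum of the generalized Möbius function over all positive integers, taken in Greatest Prime Order, vanishes: ∑_{n ∈ ℕ, (GPO)} μ⋆(n, s) = 0. -/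
/-- The Greatest Prime Order class of index `m ≥ 1`: the set of integers `n ≥ 2` whose
greatest prime factor is the `m`-th prime `p_m = Nat.nth Nat.Prime (m-1)` (`p_1 = 2`). -/
def GPOClass (m : ℕ) : Set ℕ :=
  {n | 2 ≤ n ∧ n.primeFactors.max = ((Nat.nth Nat.Prime (m - 1) : ℕ) : WithBot ℕ)}

/-!
`μ⋆(·, s)` is multiplicative, and `μ⋆(p^k, s) = -W_p p^{-ks}` for `k ≥ 1`, where
`W_p = (p^{s π(p)} - 1)^{1/π(p)}`. Hence for `Re s > 0` the sum over the `p_M`-smooth numbers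
converges absolutely to the Euler product `∏_{p ≤ p_M} (1 - W_p / (p^s - 1))`. Since `π(2) = 1`,
`W_2 = 2^s - 1` and the factor at `2` vanishes. The `p_M`-smooth numbers are `1` together with the
GPO classes `1, …, M`, so every partial sum `1 + ∑_{m ≤ M} T_m(s)` is already `0`.
-/

open Nat Complex

noncomputable def muStarWeight (s : ℂ) (p : ℕ) : ℂ :=
  ((p : ℂ) ^ (s * (p.primeCounting : ℂ)) - 1) ^ ((p.primeCounting : ℂ))⁻¹

lemma natCast_pow_cpow (p k : ℕ) (s : ℂ) : ((p ^ k : ℕ) : ℂ) ^ s = ((p : ℂ) ^ s) ^ k := by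
  rw [Nat.cast_pow, ← natCast_cpow_natCast_mul, cpow_nat_mul]

lemma one_lt_norm_natCast_cpow {n : ℕ} (hn : 1 < n) {s : ℂ} (hs : 0 < s.re) :
    1 < ‖(n : ℂ) ^ s‖ := by
  rw [norm_natCast_cpow_of_pos (by omega)]
  exact Real.one_lt_rpow (by exact_mod_cast hn) hs

section muStar

variable (s : ℂ)

lemma muStar_one : muStar 1 s = 1 := by simp [muStar]

lemma muStar_mul {m n : ℕ} (h : m.Coprime n) : muStar (m * n) s = muStar m s * muStar n s := by
  rcases eq_or_ne m 0 with rfl | hm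
  · obtain rfl : n = 1 := (Nat.coprime_zero_left n).mp h
    simp [muStar_one]
  rcases eq_or_ne n 0 with rfl | hn
  · obtain rfl : m = 1 := (Nat.coprime_zero_right m).mp h
    simp [muStar_one]
  have hd : Disjoint m.primeFactors n.primeFactors := h.disjoint_primeFactors
  unfold muStar
  rw [Nat.primeFactors_mul hm hn, Finset.card_union_of_disjoint hd, Finset.prod_union hd,
    Nat.cast_mul, natCast_mul_natCast_cpow, pow_add]
  ring

lemma muStar_prime_pow {p k : ℕ} (hp : p.Prime) (hk : k ≠ 0) :
    muStar (p ^ k) s = -muStarWeight s p * ((p : ℂ) ^ s)⁻¹ ^ k := by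
  rw [muStar, muStarWeight, Nat.primeFactors_prime_pow hk hp, Finset.card_singleton,
    Finset.prod_singleton, natCast_pow_cpow, inv_pow, div_eq_mul_inv]
  ring

lemma muStarWeight_two : muStarWeight s 2 = (2 : ℂ) ^ s - 1 := by
  rw [muStarWeight, show primeCounting 2 = 1 by decide, Nat.cast_one, mul_one, inv_one, cpow_one,
    Nat.cast_ofNat]

variable {s}

lemma summable_norm_muStar_prime_pow (hs : 0 < s.re) {p : ℕ} (hp : p.Prime) :
    Summable fun k ↦ ‖muStar (p ^ k) s‖ := by
  have hr : ‖((p : ℂ) ^ s)⁻¹‖ < 1 := by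
    rw [norm_inv]
    exact inv_lt_one_of_one_lt₀ (one_lt_norm_natCast_cpow hp.one_lt hs)
  refine .of_nonneg_of_le (fun _ ↦ norm_nonneg _) (fun k ↦ ?_)
    ((summable_geometric_of_lt_one (norm_nonneg _) hr).mul_left (max ‖muStarWeight s p‖ 1))
  rcases eq_or_ne k 0 with rfl | hk
  · simp [muStar_one]
  · rw [muStar_prime_pow s hp hk, norm_mul, norm_neg, norm_pow]
    gcongr
    exact le_max_left _ _

lemma hasSum_muStar_prime_pow (hs : 0 < s.re) {p : ℕ} (hp : p.Prime) :
    HasSum (fun k ↦ muStar (p ^ k) s) (1 - muStarWeight s p / ((p : ℂ) ^ s - 1)) := by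
  set x : ℂ := (p : ℂ) ^ s
  have hx : 1 < ‖x‖ := one_lt_norm_natCast_cpow hp.one_lt hs
  have hx0 : x ≠ 0 := norm_pos_iff.mp (one_pos.trans hx)
  have hx1 : x - 1 ≠ 0 := sub_ne_zero.mpr fun h ↦ by simp [h] at hx
  have hgeom := (hasSum_geometric_of_norm_lt_one (ξ := x⁻¹)
    (by rw [norm_inv]; exact inv_lt_one_of_one_lt₀ hx)).mul_left (-muStarWeight s p * x⁻¹)
  have hterm :
      (fun k ↦ muStar (p ^ (k + 1)) s) = fun k ↦ -muStarWeight s p * x⁻¹ * x⁻¹ ^ k := by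
    ext k
    rw [muStar_prime_pow s hp k.succ_ne_zero, _root_.pow_succ']
    ring
  have hvalue : 1 - muStarWeight s p / (x - 1) - 1 = -muStarWeight s p * x⁻¹ * (1 - x⁻¹)⁻¹ := by
    field_simp
    ring
  rwa [← hasSum_nat_add_iff' 1, Finset.sum_range_one, pow_zero, muStar_one, hterm, hvalue]

lemma tsum_muStar_two_pow (hs : 0 < s.re) : ∑' k, muStar (2 ^ k) s = 0 := by
  have h2 : (2 : ℂ) ^ s - 1 ≠ 0 := sub_ne_zero.mpr fun h ↦ by
    simpa [h] using one_lt_norm_natCast_cpow one_lt_two hs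
  rw [(hasSum_muStar_prime_pow hs prime_two).tsum_eq, Nat.cast_ofNat, muStarWeight_two,
    div_self h2, sub_self]

lemma summable_and_hasSum_muStar_smoothNumbers (hs : 0 < s.re) (N : ℕ) :
    Summable (fun n : N.smoothNumbers ↦ ‖muStar n s‖) ∧
      HasSum (fun n : N.smoothNumbers ↦ muStar n s)
        (∏ p ∈ N.primesBelow, ∑' k, muStar (p ^ k) s) :=
  EulerProduct.summable_and_hasSum_smoothNumbers_prod_primesBelow_tsum
    (f := (muStar · s)) (muStar_one s) (muStar_mul s) (summable_norm_muStar_prime_pow hs) N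

lemma tsum_muStar_smoothNumbers (hs : 0 < s.re) {N : ℕ} (hN : 2 < N) :
    ∑' n : N.smoothNumbers, muStar n s = 0 := by
  rw [(summable_and_hasSum_muStar_smoothNumbers hs N).2.tsum_eq]
  exact Finset.prod_eq_zero (mem_primesBelow.mpr ⟨hN, prime_two⟩) (tsum_muStar_two_pow hs)

end muStar

lemma Summable.subtype_of_subset {α E : Type*} [NormedAddCommGroup E] [CompleteSpace E]
    {f : α → E} {A B : Set α} (hAB : A ⊆ B) (hf : Summable fun n : B ↦ f n) :
    Summable fun n : A ↦ f n :=
  hf.comp_injective (Set.inclusion_injective hAB)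

-- `smoothNumbers N` bounds the prime factors strictly, so `N = p_M + 1` gives the `p_M`-smooth
-- numbers.
lemma GPOClass_subset_smoothNumbers {m M : ℕ} (hmM : m ≤ M) :
    GPOClass m ⊆ smoothNumbers (nth Nat.Prime (M - 1) + 1) := by
  rintro n ⟨hn, hmax⟩
  refine mem_smoothNumbers'.mpr fun p hp hpn ↦ Nat.lt_succ_of_le ?_
  have hp_le : (p : WithBot ℕ) ≤ nth Nat.Prime (m - 1) :=
    hmax ▸ Finset.le_max (mem_primeFactors.mpr ⟨hp, hpn, by omega⟩)
  exact (WithBot.coe_le_coe.mp hp_le).trans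
    (nth_monotone infinite_setOfPred_prime (by omega))

lemma pairwiseDisjoint_GPOClass : (Set.Ici 1).PairwiseDisjoint GPOClass := by
  intro a ha b hb hab
  refine Set.disjoint_left.mpr fun n ⟨_, hna⟩ ⟨_, hnb⟩ ↦ hab ?_
  have := nth_injective infinite_setOfPred_prime (WithBot.coe_injective (hna.symm.trans hnb))
  simp only [Set.mem_Ici] at ha hb
  omega

lemma mem_GPOClass_count_add_one {n : ℕ} (hn : 2 ≤ n) :
    n ∈ GPOClass (count Nat.Prime (n.primeFactors.max' (nonempty_primeFactors.mpr hn)) + 1) := by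
  refine ⟨hn, ?_⟩
  rw [Nat.add_sub_cancel, nth_count (prime_of_mem_primeFactors (Finset.max'_mem _ _))]
  exact (Finset.coe_max' _).symm

lemma smoothNumbers_nth_prime_eq_union_biUnion_GPOClass {M : ℕ} (hM : 1 ≤ M) :
    smoothNumbers (nth Nat.Prime (M - 1) + 1) = {1} ∪ ⋃ m ∈ Finset.Icc 1 M, GPOClass m := by
  ext n
  simp only [Set.mem_union, Set.mem_singleton_iff, Set.mem_iUnion, Finset.mem_Icc, exists_prop]
  refine ⟨fun hn ↦ ?_, ?_⟩
  · obtain rfl | hn2 : n = 1 ∨ 2 ≤ n := by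
      have := ne_zero_of_mem_smoothNumbers hn
      omega
    · exact .inl rfl
    refine .inr ⟨_, ⟨Nat.le_add_left 1 _, ?_⟩, mem_GPOClass_count_add_one hn2⟩
    have hq := Finset.max'_mem _ (nonempty_primeFactors.mpr hn2)
    have hq_lt := mem_smoothNumbers'.mp hn _ (prime_of_mem_primeFactors hq)
      (dvd_of_mem_primeFactors hq)
    have := count_monotone Nat.Prime (Nat.le_of_lt_succ hq_lt)
    rw [count_nth_of_infinite infinite_setOfPred_prime] at this
    omega
  · rintro (rfl | ⟨m, ⟨-, hmM⟩, hn⟩)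
    · exact mem_smoothNumbers_of_primeFactors_subset one_ne_zero (by simp)
    · exact GPOClass_subset_smoothNumbers hmM hn

lemma tsum_smoothNumbers_nth_prime_eq_add_sum_tsum_GPOClass {E : Type*} [NormedAddCommGroup E]
    [CompleteSpace E] {f : ℕ → E} {M : ℕ} (hM : 1 ≤ M)
    (hf : Summable fun n : smoothNumbers (nth Nat.Prime (M - 1) + 1) ↦ f n) :
    ∑' n : smoothNumbers (nth Nat.Prime (M - 1) + 1), f n =
      f 1 + ∑ m ∈ Finset.Icc 1 M, ∑' n : GPOClass m, f n := by
  have hset := smoothNumbers_nth_prime_eq_union_biUnion_GPOClass hM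
  have hdisj : Disjoint {1} (⋃ m ∈ Finset.Icc 1 M, GPOClass m) := by
    simp only [Set.disjoint_singleton_left, Set.mem_iUnion]
    rintro ⟨m, -, h, -⟩
    omega
  rw [hset, Summable.tsum_union_disjoint hdisj ((Set.finite_singleton 1).summable _)
      (hf.subtype_of_subset (hset ▸ Set.subset_union_right)),
    tsum_singleton, Summable.tsum_finset_bUnion_disjoint
      (pairwiseDisjoint_GPOClass.subset fun m hm ↦ (Finset.mem_Icc.mp hm).1)
      fun m hm ↦ hf.subtype_of_subset (GPOClass_subset_smoothNumbers (Finset.mem_Icc.mp hm).2)]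

lemma summable_norm_muStar_GPOClass {s : ℂ} (hs : 0 < s.re) (m : ℕ) :
    Summable fun n : GPOClass m ↦ ‖muStar n s‖ :=
  (summable_and_hasSum_muStar_smoothNumbers hs _).1.subtype_of_subset
    (f := (‖muStar · s‖)) (GPOClass_subset_smoothNumbers le_rfl)

lemma one_add_sum_tsum_muStar_GPOClass {s : ℂ} (hs : 0 < s.re) {M : ℕ} (hM : 1 ≤ M) :
    1 + ∑ m ∈ Finset.Icc 1 M, ∑' n : GPOClass m, muStar n s = 0 := by
  have hsum : Summable fun n : smoothNumbers (nth Nat.Prime (M - 1) + 1) ↦ muStar n s :=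
    (summable_and_hasSum_muStar_smoothNumbers hs _).1.of_norm
  have hN : 2 < nth Nat.Prime (M - 1) + 1 :=
    Nat.lt_succ_of_le ((add_two_le_nth_prime _).trans' (by omega))
  rw [← muStar_one s,
    ← tsum_smoothNumbers_nth_prime_eq_add_sum_tsum_GPOClass (f := (muStar · s)) hM hsum,
    tsum_muStar_smoothNumbers hs hN]

/-- for `Re s > 0`, (i) for every `m ≥ 1` the series
`T_m(s) = ∑_{n ≥ 2, greatest prime factor of n = p_m} μ⋆(n, s)` converges absolutely, and
(ii) `1 + ∑_{m=1}^∞ T_m(s) = 0`, the outer sum being the limit of its partial sums: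
the sum of `μ⋆(·, s)` over ℕ in Greatest Prime Order vanishes. -/
theorem stmt_12 (s : ℂ) (hs : 0 < s.re) :
    (∀ m : ℕ, 1 ≤ m → Summable (fun n : GPOClass m => ‖muStar (n : ℕ) s‖)) ∧
    Filter.Tendsto
      (fun M : ℕ => 1 + ∑ m ∈ Finset.Icc 1 M, ∑' n : GPOClass m, muStar (n : ℕ) s)
      Filter.atTop (nhds 0) :=
  ⟨fun m _ ↦ summable_norm_muStar_GPOClass hs m,
    tendsto_const_nhds.congr' <| Filter.eventually_atTop.mpr
      ⟨1, fun _ hM ↦ (one_add_sum_tsum_muStar_GPOClass hs hM).symm⟩⟩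
end

section
/- For each m ≥ 1 let T_m = ∑ μ(n), summed over all integers n ≥ 2 whose greatest prime factor equals the m-th prime p_m (this sum has only finitely many nonzero terms, since μ(n) = 0 unless n is squarefree, and converges unconditionally). Then 1 + ∑_{m=1}^{∞} T_m = 0; that is, the partial sums ∑_{m=1}^{M} T_m converge to −1 as M → ∞. Equivalently, the sum of the Möbius function over all positive integers, taken in Greatest Prime Order, vanishes: ∑_{n ∈ ℕ, (GPO)} μ(n) = 0. -/
open ArithmeticFunction Finset

/-- product of the first `m` primes -/
noncomputable def gpoQ (m : ℕ) : ℕ := ∏ i ∈ Finset.range m, Nat.nth Nat.Prime i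

lemma gpoQ_pos (m : ℕ) : 0 < gpoQ m :=
  Finset.prod_pos fun i _ => (Nat.prime_nth_prime i).pos

lemma prime_dvd_gpoQ_iff {p m : ℕ} (hp : p.Prime) :
    p ∣ gpoQ m ↔ ∃ i < m, p = Nat.nth Nat.Prime i := by
  rw [gpoQ, hp.prime.dvd_finset_prod_iff]
  constructor
  · rintro ⟨i, hi, hdvd⟩
    exact ⟨i, Finset.mem_range.mp hi,
      ((Nat.prime_dvd_prime_iff_eq hp (Nat.prime_nth_prime i)).mp hdvd)⟩
  · rintro ⟨i, hi, rfl⟩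
    exact ⟨i, Finset.mem_range.mpr hi, dvd_rfl⟩

lemma squarefree_gpoQ (m : ℕ) : Squarefree (gpoQ m) := by
  induction m with
  | zero => simp [gpoQ]
  | succ m ih =>
    have hQ : gpoQ (m + 1) = gpoQ m * Nat.nth Nat.Prime m := by
      rw [gpoQ, Finset.prod_range_succ]; rfl
    have hprime := Nat.prime_nth_prime m
    have hnd : ¬ (Nat.nth Nat.Prime m ∣ gpoQ m) := by
      rw [prime_dvd_gpoQ_iff hprime]
      rintro ⟨i, hi, heq⟩
      have h2 := (Nat.nth_lt_nth Nat.infinite_setOf_prime (k := i) (n := m)).mpr hi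
      rw [← heq] at h2
      exact lt_irrefl _ h2
    have hcop : (gpoQ m).Coprime (Nat.nth Nat.Prime m) :=
      Nat.coprime_comm.mp ((Nat.Prime.coprime_iff_not_dvd hprime).mpr hnd)
    rw [hQ, Nat.squarefree_mul hcop]
    exact ⟨ih, hprime.squarefree⟩

lemma dvd_gpoQ_of_squarefree {n m : ℕ} (hn : Squarefree n)
    (h : ∀ p ∈ n.primeFactors, ∃ i < m, p = Nat.nth Nat.Prime i) : n ∣ gpoQ m := by
  have hsub : n.primeFactors ⊆ (Finset.range m).image (Nat.nth Nat.Prime) := by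
    intro p hp
    obtain ⟨i, hi, rfl⟩ := h p hp
    exact Finset.mem_image.mpr ⟨i, Finset.mem_range.mpr hi, rfl⟩
  have h1 : n = ∏ p ∈ n.primeFactors, p := (Nat.prod_primeFactors_of_squarefree hn).symm
  have h2 : gpoQ m = ∏ p ∈ (Finset.range m).image (Nat.nth Nat.Prime), p := by
    rw [Finset.prod_image]
    · rfl
    · intro i _ j _ hij
      exact (Nat.nth_injective Nat.infinite_setOf_prime) hij
  rw [h1, h2]
  exact Finset.prod_dvd_prod_of_subset _ _ _ hsub


lemma gpoQ_dvd {a b : ℕ} (h : a ≤ b) : gpoQ a ∣ gpoQ b :=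
  Finset.prod_dvd_prod_of_subset _ _ _ (Finset.range_subset_range.mpr h)

lemma gpoQ_ne_one {M : ℕ} (hM : 1 ≤ M) : gpoQ M ≠ 1 := by
  intro h
  have h2 : Nat.nth Nat.Prime 0 ∣ gpoQ M :=
    (prime_dvd_gpoQ_iff (Nat.prime_nth_prime 0)).mpr ⟨0, hM, rfl⟩
  rw [h] at h2
  exact (Nat.prime_nth_prime 0).one_lt.ne' (Nat.eq_one_of_dvd_one h2)

/-- real-valued moebius -/
noncomputable def gpoF (n : ℕ) : ℝ := ((ArithmeticFunction.moebius n : ℤ) : ℝ)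

noncomputable def gpoS (Q : ℕ) : ℝ := ∑ n ∈ Q.divisors, gpoF n

lemma gpoS_eq (Q : ℕ) : gpoS Q = if Q = 1 then 1 else 0 := by
  have h : (ArithmeticFunction.moebius * (ArithmeticFunction.zeta : ArithmeticFunction ℤ)) Q
      = (1 : ArithmeticFunction ℤ) Q := by rw [ArithmeticFunction.moebius_mul_coe_zeta]
  rw [ArithmeticFunction.coe_mul_zeta_apply, ArithmeticFunction.one_apply] at h
  have : gpoS Q = ((∑ i ∈ Q.divisors, (ArithmeticFunction.moebius i : ℤ) : ℤ) : ℝ) := by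
    rw [gpoS]; push_cast; rfl
  rw [this, h]
  split <;> simp

/-- the finite support set of class `m` -/
noncomputable def gpoD (m : ℕ) : Finset ℕ := (gpoQ m).divisors \ (gpoQ (m - 1)).divisors

lemma mem_gpoD_iff {m n : ℕ} (hm : 1 ≤ m) (hn : Squarefree n) :
    n ∈ gpoD m ↔ n ∈ GPOClass m := by
  have hQm : gpoQ m ≠ 0 := (gpoQ_pos m).ne'
  have hQm1 : gpoQ (m - 1) ≠ 0 := (gpoQ_pos (m - 1)).ne'
  have hsucc : gpoQ m = gpoQ (m - 1) * Nat.nth Nat.Prime (m - 1) := by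
    conv_lhs => rw [show m = (m - 1) + 1 by omega]
    rw [gpoQ, gpoQ, Finset.prod_range_succ]
  set p := Nat.nth Nat.Prime (m - 1) with hp
  have hpprime : p.Prime := Nat.prime_nth_prime (m - 1)
  constructor
  · intro h
    obtain ⟨h1, h2⟩ := Finset.mem_sdiff.mp h
    have hdvd : n ∣ gpoQ m := (Nat.mem_divisors.mp h1).1
    have hndvd : ¬ n ∣ gpoQ (m - 1) := fun hd => h2 (Nat.mem_divisors.mpr ⟨hd, hQm1⟩)
    have hn0 : n ≠ 0 := hn.ne_zero
    -- p divides n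
    have hpn : p ∣ n := by
      by_contra hpn
      apply hndvd
      have hcop : n.Coprime p := Nat.coprime_comm.mp ((hpprime.coprime_iff_not_dvd).mpr hpn)
      exact hcop.dvd_of_dvd_mul_right (hsucc ▸ hdvd)
    have hpmem : p ∈ n.primeFactors := Nat.mem_primeFactors.mpr ⟨hpprime, hpn, hn0⟩
    refine ⟨?_, ?_⟩
    · exact le_trans hpprime.two_le (Nat.le_of_dvd (Nat.pos_of_ne_zero hn0) hpn)
    · apply le_antisymm
      · apply Finset.max_le
        intro q hq
        have hqp : q.Prime := Nat.prime_of_mem_primeFactors hq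
        have hqdvd : q ∣ gpoQ m := (Nat.dvd_of_mem_primeFactors hq).trans hdvd
        obtain ⟨i, hi, rfl⟩ := (prime_dvd_gpoQ_iff hqp).mp hqdvd
        have hle : Nat.nth Nat.Prime i ≤ Nat.nth Nat.Prime (m - 1) :=
          (Nat.nth_le_nth (p := Nat.Prime) Nat.infinite_setOf_prime).mpr (by omega)
        exact WithBot.coe_le_coe.mpr hle
      · exact Finset.le_max hpmem
  · rintro ⟨h2, hmax⟩
    have hn0 : n ≠ 0 := by omega
    have hpmem : p ∈ n.primeFactors := Finset.mem_of_max hmax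
    have hdvd : n ∣ gpoQ m := by
      apply dvd_gpoQ_of_squarefree hn
      intro q hq
      have hqp : q.Prime := Nat.prime_of_mem_primeFactors hq
      have hqle : q ≤ p := by
        have h3 := Finset.le_max hq
        rw [hmax] at h3
        exact WithBot.coe_le_coe.mp h3
      refine ⟨Nat.count Nat.Prime q, ?_, (Nat.nth_count hqp).symm⟩
      by_contra hc
      have : p < Nat.nth Nat.Prime (Nat.count Nat.Prime q) :=
        (Nat.nth_lt_nth Nat.infinite_setOf_prime).mpr (by omega)
      rw [Nat.nth_count hqp] at this
      omega
    have hndvd : ¬ n ∣ gpoQ (m - 1) := by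
      intro hd
      have hpd : p ∣ gpoQ (m - 1) := (Nat.dvd_of_mem_primeFactors hpmem).trans hd
      obtain ⟨i, hi, heq⟩ := (prime_dvd_gpoQ_iff hpprime).mp hpd
      have : Nat.nth Nat.Prime i < p :=
        (Nat.nth_lt_nth Nat.infinite_setOf_prime).mpr hi
      omega
    exact Finset.mem_sdiff.mpr ⟨Nat.mem_divisors.mpr ⟨hdvd, hQm⟩,
      fun hmem => hndvd (Nat.mem_divisors.mp hmem).1⟩

lemma gpo_indicator_zero {m : ℕ} (hm : 1 ≤ m) :
    ∀ b ∉ gpoD m, (GPOClass m).indicator gpoF b = 0 := by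
  intro b hb
  rcases eq_or_ne (gpoF b) 0 with h | h
  · exact Set.indicator_apply_eq_zero.mpr fun _ => h
  · have hsf : Squarefree b := by
      rw [← ArithmeticFunction.moebius_ne_zero_iff_squarefree]
      intro h0
      exact h (by simp [gpoF, h0])
    apply Set.indicator_apply_eq_zero.mpr
    intro hmem
    exact absurd ((mem_gpoD_iff hm hsf).mpr hmem) hb

lemma gpo_tsum_eq {m : ℕ} (hm : 1 ≤ m) :
    (∑' n : GPOClass m, gpoF (n : ℕ)) = gpoS (gpoQ m) - gpoS (gpoQ (m - 1)) := by
  rw [_root_.tsum_subtype, tsum_eq_sum (gpo_indicator_zero hm)]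
  have hsum : ∑ b ∈ gpoD m, (GPOClass m).indicator gpoF b = ∑ b ∈ gpoD m, gpoF b := by
    apply Finset.sum_congr rfl
    intro b hb
    have hsf : Squarefree b :=
      (squarefree_gpoQ m).squarefree_of_dvd
        (Nat.mem_divisors.mp (Finset.mem_sdiff.mp hb).1).1
    exact Set.indicator_of_mem ((mem_gpoD_iff hm hsf).mp hb) _
  rw [hsum, gpoD, Finset.sum_sdiff_eq_sub
    (Nat.divisors_subset_of_dvd (gpoQ_pos m).ne' (gpoQ_dvd (by omega)))]
  rfl

/-- for each `m ≥ 1` the sum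
`T_m = ∑_{n ≥ 2, greatest prime factor of n = p_m} μ(n)` converges unconditionally
(only finitely many terms are nonzero, since `μ(n) = 0` unless `n` is squarefree), and
`1 + ∑_{m=1}^∞ T_m = 0`: the partial sums `∑_{m=1}^{M} T_m` converge to `−1`, i.e. the sum
of the Möbius function over ℕ in Greatest Prime Order vanishes. -/
theorem stmt_13 :
    (∀ m : ℕ, 1 ≤ m →
      Summable (fun n : GPOClass m => ((ArithmeticFunction.moebius (n : ℕ) : ℤ) : ℝ))) ∧
    Filter.Tendsto
      (fun M : ℕ =>
        1 + ∑ m ∈ Finset.Icc 1 M,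
          ∑' n : GPOClass m, ((ArithmeticFunction.moebius (n : ℕ) : ℤ) : ℝ))
      Filter.atTop (nhds 0) := by
  constructor
  · intro m hm
    have h : Summable ((GPOClass m).indicator gpoF) :=
      summable_of_ne_finset_zero (gpo_indicator_zero hm)
    have h2 : Summable (gpoF ∘ (Subtype.val : GPOClass m → ℕ)) :=
      summable_subtype_iff_indicator.mpr h
    exact h2
  · have key : ∀ M : ℕ, 1 ≤ M →
        (1 + ∑ m ∈ Finset.Icc 1 M,
          ∑' n : GPOClass m, ((ArithmeticFunction.moebius (n : ℕ) : ℤ) : ℝ)) = 0 := by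
      intro M hM
      have h1 : ∀ m ∈ Finset.Icc 1 M,
          (∑' n : GPOClass m, ((ArithmeticFunction.moebius (n : ℕ) : ℤ) : ℝ))
            = gpoS (gpoQ m) - gpoS (gpoQ (m - 1)) := by
        intro m hm
        exact gpo_tsum_eq (Finset.mem_Icc.mp hm).1
      rw [Finset.sum_congr rfl h1]
      have h2 : ∑ m ∈ Finset.Icc 1 M, (gpoS (gpoQ m) - gpoS (gpoQ (m - 1)))
          = ∑ i ∈ Finset.range M, (gpoS (gpoQ (i + 1)) - gpoS (gpoQ i)) := by
        rw [← Finset.Ico_add_one_right_eq_Icc, Finset.sum_Ico_eq_sum_range]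
        apply Finset.sum_congr rfl
        intro i _
        rw [Nat.add_comm 1 i]
        norm_num
      rw [h2, Finset.sum_range_sub (fun i => gpoS (gpoQ i))]
      have hQ0 : gpoQ 0 = 1 := by simp [gpoQ]
      rw [gpoS_eq, gpoS_eq, hQ0, if_neg (gpoQ_ne_one hM), if_pos rfl]
      ring
    apply Filter.Tendsto.congr' _ (tendsto_const_nhds (x := (0 : ℝ)))
    filter_upwards [Filter.eventually_ge_atTop 1] with M hM
    exact (key M hM).symm
end
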